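/- arXiv:2604.02202 — 2 statements merged into one kernel-verified Lean document; each statement's English description precedes it below -/
import Mathlib

section
/- Suppose x, Δx = Uα ∈ ℝⁿ where U has orthonormal columns, and suppose the reduced KKT conditions hold: Uᵀ∇f(x) + Lα + UᵀJ_h(x)ᵀλ + UᵀJ_g(x)ᵀμ = 0, h(x) + J_h(x)Uα = 0, g(x) + J_g(x)Uα ≤ 0, μ ≥ 0, and μᵢ·(g(x) + J_g(x)Uα)ᵢ = 0 for all i. Then ⟨∇f(x), Δx⟩ = −L‖α‖₂² + λᵀh(x) + μᵀg(x). -/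
open scoped RealInnerProductSpace

/-- The reduced KKT conditions yield the identity
⟨∇f(x), Δx⟩ = −L‖α‖² + λᵀh(x) + μᵀg(x). -/
theorem reduced_kkt_directional_identity
    {n d me mi : ℕ}
    (f : EuclideanSpace ℝ (Fin n) → ℝ)
    (h : Fin me → EuclideanSpace ℝ (Fin n) → ℝ)
    (g : Fin mi → EuclideanSpace ℝ (Fin n) → ℝ)
    (x gf : EuclideanSpace ℝ (Fin n))
    (ghx : Fin me → EuclideanSpace ℝ (Fin n))
    (ggx : Fin mi → EuclideanSpace ℝ (Fin n))
    (hf : HasGradientAt f gf x)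
    (hh : ∀ i, HasGradientAt (h i) (ghx i) x)
    (hg : ∀ i, HasGradientAt (g i) (ggx i) x)
    (U : Fin d → EuclideanSpace ℝ (Fin n))
    (hU : ∀ j k, ⟪U j, U k⟫ = if j = k then (1 : ℝ) else 0)
    (α : EuclideanSpace ℝ (Fin d))
    (L : ℝ) (hL : 0 < L)
    (lam : Fin me → ℝ) (mu : Fin mi → ℝ) (hmu : ∀ i, 0 ≤ mu i)
    (Δx : EuclideanSpace ℝ (Fin n)) (hΔx : Δx = ∑ j, α j • U j)
    (hstat : ∀ j, ⟪U j, gf⟫ + L * α j + (∑ i, lam i * ⟪U j, ghx i⟫)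
        + (∑ i, mu i * ⟪U j, ggx i⟫) = 0)
    (hfeasEq : ∀ i, h i x + ⟪ghx i, Δx⟫ = 0)
    (hfeasIneq : ∀ i, g i x + ⟪ggx i, Δx⟫ ≤ 0)
    (hcomp : ∀ i, mu i * (g i x + ⟪ggx i, Δx⟫) = 0) :
    ⟪gf, Δx⟫ = -L * ‖α‖ ^ 2 + (∑ i, lam i * h i x) + (∑ i, mu i * g i x) := by
  have key : ∀ v : EuclideanSpace ℝ (Fin n), ⟪v, Δx⟫ = ∑ j, α j * ⟪v, U j⟫ := by
    intro v
    rw [hΔx, inner_sum]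
    simp only [real_inner_smul_right]
  have hnorm : ‖α‖ ^ 2 = ∑ j, α j * α j := by
    rw [← real_inner_self_eq_norm_sq]
    rw [PiLp.inner_apply]
    exact Finset.sum_congr rfl fun j _ => by simp only [RCLike.inner_apply, conj_trivial]
  have hUgf : ∀ j, ⟪U j, gf⟫ = -(L * α j) - (∑ i, lam i * ⟪U j, ghx i⟫)
      - (∑ i, mu i * ⟪U j, ggx i⟫) := fun j => by have := hstat j; linarith
  have hgd : ∀ (w : EuclideanSpace ℝ (Fin n)), ∑ j, α j * ⟪U j, w⟫ = ⟪w, Δx⟫ := by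
    intro w
    rw [key]
    exact Finset.sum_congr rfl fun j _ => by rw [real_inner_comm]
  have hgfΔ : ⟪gf, Δx⟫ = ∑ j, α j * ⟪U j, gf⟫ := (hgd gf).symm
  have hEqi : ∀ i, ⟪ghx i, Δx⟫ = -(h i x) := fun i => by have := hfeasEq i; linarith
  have hmuIneq : ∀ i, mu i * ⟪ggx i, Δx⟫ = -(mu i * g i x) := fun i => by
    have := hcomp i; nlinarith [hcomp i]
  rw [hgfΔ]
  have swap : ∀ (m : ℕ) (c : Fin m → ℝ) (w : Fin m → EuclideanSpace ℝ (Fin n)),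
      ∑ j, α j * (∑ i, c i * ⟪U j, w i⟫) = ∑ i, c i * ⟪w i, Δx⟫ := by
    intro m c w
    have step : ∀ j, α j * (∑ i, c i * ⟪U j, w i⟫) = ∑ i, α j * (c i * ⟪U j, w i⟫) := fun j =>
      Finset.mul_sum _ _ _
    rw [Finset.sum_congr rfl fun j _ => step j, Finset.sum_comm]
    refine Finset.sum_congr rfl fun i _ => ?_
    rw [← hgd (w i), Finset.mul_sum]
    exact Finset.sum_congr rfl fun j _ => by ring
  have expand : ∑ j, α j * ⟪U j, gf⟫
      = (∑ j, α j * (-(L * α j))) - (∑ i, lam i * ⟪ghx i, Δx⟫)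
        - (∑ i, mu i * ⟪ggx i, Δx⟫) := by
    rw [← swap me lam ghx, ← swap mi mu ggx, ← Finset.sum_sub_distrib, ← Finset.sum_sub_distrib]
    exact Finset.sum_congr rfl fun j _ => by rw [hUgf j]; ring
  rw [expand]
  have t1 : ∑ j, α j * (-(L * α j)) = -L * ∑ j, α j * α j := by
    rw [Finset.mul_sum]; exact Finset.sum_congr rfl fun j _ => by ring
  have t2 : ∑ i, lam i * ⟪ghx i, Δx⟫ = -∑ i, lam i * h i x := by
    rw [← Finset.sum_neg_distrib]
    exact Finset.sum_congr rfl fun i _ => by rw [hEqi i]; ring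
  have t3 : ∑ i, mu i * ⟪ggx i, Δx⟫ = -∑ i, mu i * g i x := by
    rw [← Finset.sum_neg_distrib]
    exact Finset.sum_congr rfl fun i _ => by rw [hmuIneq i]
  rw [t1, t2, t3, hnorm]
  ring
end

section
/- (One-step merit decrease.) Let Φ(x) := f(x) + τ‖h(x)‖₁ + τ‖[g(x)]₊‖₁ with τ ≥ max{Λ, M}. Suppose f and all components of h, g have Lipschitz gradients with constants ℓ_f, ℓ_{h,i}, ℓ_{g,i}, and let C_Φ := ℓ_f/2 + (τ/2)∑ᵢℓ_{h,i} + (τ/2)∑ᵢℓ_{g,i}. If Δx = Uα where (α, λ, μ) satisfies the reduced KKT conditions of the subspace SQP subproblem with regularization L > 0 and multiplier bounds ‖λ‖_∞ ≤ Λ, ‖μ‖_∞ ≤ M, then Φ(x + Δx) − Φ(x) ≤ −(L − C_Φ)‖Δx‖₂². -/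
open scoped RealInnerProductSpace

section Aux

variable {E : Type*} [NormedAddCommGroup E] [InnerProductSpace ℝ E] [CompleteSpace E]

lemma my_descent (f : E → ℝ) (gf : E → E) (ℓ : ℝ)
    (hf : ∀ y, HasGradientAt f (gf y) y)
    (lip : ∀ y z, ‖gf y - gf z‖ ≤ ℓ * ‖y - z‖)
    (x v : E) : f (x + v) ≤ f x + ⟪gf x, v⟫ + ℓ / 2 * ‖v‖ ^ 2 := by
  set χ : ℝ → ℝ := fun t => f (x + t • v) - t * ⟪gf x, v⟫ - ℓ / 2 * ‖v‖ ^ 2 * t ^ 2 with hχ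
  have hderiv : ∀ t : ℝ, HasDerivAt χ
      (⟪gf (x + t • v), v⟫ - ⟪gf x, v⟫ - ℓ * ‖v‖ ^ 2 * t) t := by
    intro t
    have hc : HasDerivAt (fun t : ℝ => x + t • v) v t := by
      simpa using ((hasDerivAt_id t).smul_const v).const_add x
    have h1 : HasDerivAt (fun t : ℝ => f (x + t • v)) ⟪gf (x + t • v), v⟫ t := by
      have := (hf (x + t • v)).hasFDerivAt.comp_hasDerivAt t hc
      exact this
    have h2 : HasDerivAt (fun t : ℝ => t * ⟪gf x, v⟫) ⟪gf x, v⟫ t := by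
      simpa using (hasDerivAt_id t).mul_const ⟪gf x, v⟫
    have h3 : HasDerivAt (fun t : ℝ => ℓ / 2 * ‖v‖ ^ 2 * t ^ 2) (ℓ * ‖v‖ ^ 2 * t) t := by
      have := ((hasDerivAt_pow 2 t).const_mul (ℓ / 2 * ‖v‖ ^ 2))
      exact this.congr_deriv (by rw [show (2:ℕ) - 1 = 1 from rfl]; push_cast; ring)
    exact (h1.sub h2).sub h3
  have hanti : AntitoneOn χ (Set.Icc 0 1) := by
    apply antitoneOn_of_deriv_nonpos (convex_Icc 0 1)
    · exact fun t _ => (hderiv t).continuousAt.continuousWithinAt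
    · exact fun t _ => ((hderiv t).differentiableAt).differentiableWithinAt
    · intro t ht
      rw [interior_Icc] at ht
      rw [(hderiv t).deriv]
      have hb : ⟪gf (x + t • v) - gf x, v⟫ ≤ ℓ * ‖v‖ ^ 2 * t := by
        calc ⟪gf (x + t • v) - gf x, v⟫ ≤ ‖gf (x + t • v) - gf x‖ * ‖v‖ :=
              real_inner_le_norm _ _
          _ ≤ (ℓ * ‖(x + t • v) - x‖) * ‖v‖ := by
              apply mul_le_mul_of_nonneg_right (lip _ _) (norm_nonneg _)
          _ = ℓ * ‖v‖ ^ 2 * t := by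
              rw [add_sub_cancel_left, norm_smul, Real.norm_eq_abs,
                abs_of_pos ht.1]
              ring
      have := inner_sub_left (𝕜 := ℝ) (gf (x + t • v)) (gf x) v
      rw [this] at hb
      linarith
  have h01 : χ 1 ≤ χ 0 := hanti (by norm_num) (by norm_num) (by norm_num)
  simp only [hχ, one_smul, zero_smul, add_zero, one_pow, zero_pow, one_mul, zero_mul,
    mul_zero, sub_zero] at h01
  linarith

lemma my_descent_lower (f : E → ℝ) (gf : E → E) (ℓ : ℝ)
    (hf : ∀ y, HasGradientAt f (gf y) y)
    (lip : ∀ y z, ‖gf y - gf z‖ ≤ ℓ * ‖y - z‖)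
    (x v : E) : f x + ⟪gf x, v⟫ - ℓ / 2 * ‖v‖ ^ 2 ≤ f (x + v) := by
  have hneg : ∀ y, HasGradientAt (fun z => -(f z)) (-(gf y)) y := by
    intro y
    rw [hasGradientAt_iff_hasFDerivAt, map_neg]
    exact (hf y).hasFDerivAt.neg
  have lipneg : ∀ y z, ‖(-(gf y)) - (-(gf z))‖ ≤ ℓ * ‖y - z‖ := by
    intro y z
    have e : (-(gf y)) - (-(gf z)) = gf z - gf y := by abel
    rw [e, norm_sub_rev]
    exact lip y z
  have := my_descent (fun z => -(f z)) (fun y => -(gf y)) ℓ hneg lipneg x v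
  simp only [inner_neg_left] at this
  linarith

end Aux

/-- One-step decrease of the exact-penalty merit function along a reduced-KKT step. -/
theorem merit_function_decrease
    {n d me mi : ℕ}
    (f : EuclideanSpace ℝ (Fin n) → ℝ)
    (h : Fin me → EuclideanSpace ℝ (Fin n) → ℝ)
    (g : Fin mi → EuclideanSpace ℝ (Fin n) → ℝ)
    (gf : EuclideanSpace ℝ (Fin n) → EuclideanSpace ℝ (Fin n))
    (gh : Fin me → EuclideanSpace ℝ (Fin n) → EuclideanSpace ℝ (Fin n))
    (gg : Fin mi → EuclideanSpace ℝ (Fin n) → EuclideanSpace ℝ (Fin n))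
    (ℓf : ℝ) (ℓh : Fin me → ℝ) (ℓg : Fin mi → ℝ)
    (hf : ∀ y, HasGradientAt f (gf y) y)
    (hh : ∀ i y, HasGradientAt (h i) (gh i y) y)
    (hg : ∀ i y, HasGradientAt (g i) (gg i y) y)
    (hflip : ∀ y z, ‖gf y - gf z‖ ≤ ℓf * ‖y - z‖)
    (hhlip : ∀ i y z, ‖gh i y - gh i z‖ ≤ ℓh i * ‖y - z‖)
    (hglip : ∀ i y z, ‖gg i y - gg i z‖ ≤ ℓg i * ‖y - z‖)
    (U : Fin d → EuclideanSpace ℝ (Fin n))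
    (hU : ∀ j k, ⟪U j, U k⟫ = if j = k then (1 : ℝ) else 0)
    (x : EuclideanSpace ℝ (Fin n))
    (α : EuclideanSpace ℝ (Fin d))
    (L : ℝ) (hL : 0 < L)
    (lam : Fin me → ℝ) (mu : Fin mi → ℝ) (hmu_nonneg : ∀ i, 0 ≤ mu i)
    (Λ M τ : ℝ)
    (hlam_bd : ∀ i, |lam i| ≤ Λ) (hmu_bd : ∀ i, |mu i| ≤ M)
    (hτΛ : Λ ≤ τ) (hτM : M ≤ τ)
    (Δx : EuclideanSpace ℝ (Fin n)) (hΔx : Δx = ∑ j, α j • U j)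
    (hstat : ∀ j, ⟪U j, gf x⟫ + L * α j + (∑ i, lam i * ⟪U j, gh i x⟫)
        + (∑ i, mu i * ⟪U j, gg i x⟫) = 0)
    (hfeasEq : ∀ i, h i x + ⟪gh i x, Δx⟫ = 0)
    (hfeasIneq : ∀ i, g i x + ⟪gg i x, Δx⟫ ≤ 0)
    (hcomp : ∀ i, mu i * (g i x + ⟪gg i x, Δx⟫) = 0)
    (Φ : EuclideanSpace ℝ (Fin n) → ℝ)
    (hΦ : Φ = fun y => f y + τ * (∑ i, |h i y|) + τ * (∑ i, max (g i y) 0))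
    (CΦ : ℝ)
    (hCΦ : CΦ = ℓf / 2 + (τ / 2) * (∑ i, ℓh i) + (τ / 2) * (∑ i, ℓg i)) :
    Φ (x + Δx) - Φ x ≤ -(L - CΦ) * ‖Δx‖ ^ 2 := by
  by_cases hzero : Δx = 0
  · rw [hzero]
    simp
  -- nonzero step
  have hv : (0:ℝ) < ‖Δx‖ := norm_pos_iff.2 hzero
  have hA : (0:ℝ) < ‖Δx‖ ^ 2 := by positivity
  set A := ‖Δx‖ ^ 2 with hAdef
  -- nonnegativity of Lipschitz constants
  have hℓf : 0 ≤ ℓf := by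
    have h1 : (0:ℝ) ≤ ℓf * ‖(x + Δx) - x‖ := (norm_nonneg _).trans (hflip (x + Δx) x)
    rw [add_sub_cancel_left] at h1
    nlinarith
  have hℓh : ∀ i, 0 ≤ ℓh i := by
    intro i
    have h1 : (0:ℝ) ≤ ℓh i * ‖(x + Δx) - x‖ := (norm_nonneg _).trans (hhlip i (x + Δx) x)
    rw [add_sub_cancel_left] at h1
    nlinarith
  have hℓg : ∀ i, 0 ≤ ℓg i := by
    intro i
    have h1 : (0:ℝ) ≤ ℓg i * ‖(x + Δx) - x‖ := (norm_nonneg _).trans (hglip i (x + Δx) x)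
    rw [add_sub_cancel_left] at h1
    nlinarith
  -- inner products with Δx expand over the basis
  have hinner : ∀ w : EuclideanSpace ℝ (Fin n), ⟪w, Δx⟫ = ∑ j, α j * ⟪U j, w⟫ := by
    intro w
    rw [hΔx, inner_sum]
    exact Finset.sum_congr rfl fun j _ => by
      rw [real_inner_smul_right, real_inner_comm]
  -- norm of the step
  have hUDx : ∀ j, ⟪U j, Δx⟫ = α j := by
    intro j
    rw [hΔx, inner_sum]
    simp only [real_inner_smul_right, hU]
    simp [Finset.sum_ite_eq]
  have hnorm : A = ∑ j, (α j) ^ 2 := by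
    rw [hAdef, ← real_inner_self_eq_norm_sq, hinner Δx]
    apply Finset.sum_congr rfl
    intro j _
    rw [hUDx j, sq]
  -- stationarity yields the value of ⟪gf x, Δx⟫
  have swap : ∀ (m : ℕ) (c : Fin m → ℝ) (w : Fin m → Fin d → ℝ),
      ∑ j, α j * ∑ i, c i * w i j = ∑ i, c i * ∑ j, α j * w i j := by
    intro m c w
    simp only [Finset.mul_sum]
    rw [Finset.sum_comm]
    exact Finset.sum_congr rfl fun i _ => Finset.sum_congr rfl fun j _ => by ring
  have hS : ⟪gf x, Δx⟫ = -(L * A) + (∑ i, lam i * h i x) + (∑ i, mu i * g i x) := by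
    have e1 : ⟪gf x, Δx⟫ = ∑ j, α j * ⟪U j, gf x⟫ := hinner _
    have e2 : ∀ j, α j * ⟪U j, gf x⟫ = -(L * (α j) ^ 2)
        - α j * (∑ i, lam i * ⟪U j, gh i x⟫) - α j * (∑ i, mu i * ⟪U j, gg i x⟫) := by
      intro j
      linear_combination α j * hstat j
    rw [e1, Finset.sum_congr rfl fun j _ => e2 j]
    simp only [Finset.sum_sub_distrib, Finset.sum_neg_distrib]
    rw [← Finset.mul_sum, swap me lam (fun i j => ⟪U j, gh i x⟫),
      swap mi mu (fun i j => ⟪U j, gg i x⟫), ← hnorm]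
    have e3 : ∀ i, lam i * ∑ j, α j * ⟪U j, gh i x⟫ = lam i * (-(h i x)) := by
      intro i
      rw [← hinner (gh i x)]
      have := hfeasEq i
      have : ⟪gh i x, Δx⟫ = -(h i x) := by linarith
      rw [this]
    have e4 : ∀ i, mu i * ∑ j, α j * ⟪U j, gg i x⟫ = -(mu i * g i x) := by
      intro i
      rw [← hinner (gg i x)]
      have := hcomp i
      nlinarith [hcomp i]
    rw [Finset.sum_congr rfl fun i _ => e3 i, Finset.sum_congr rfl fun i _ => e4 i]
    simp only [mul_neg, Finset.sum_neg_distrib]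
    ring
  -- descent bounds
  have hf_bd : f (x + Δx) ≤ f x + ⟪gf x, Δx⟫ + ℓf / 2 * A :=
    my_descent f gf ℓf hf hflip x Δx
  have hh_bd : ∀ i, |h i (x + Δx)| ≤ ℓh i / 2 * A := by
    intro i
    have hu := my_descent (h i) (gh i) (ℓh i) (hh i) (hhlip i) x Δx
    have hl := my_descent_lower (h i) (gh i) (ℓh i) (hh i) (hhlip i) x Δx
    have hfe := hfeasEq i
    rw [abs_le]
    constructor <;> [skip; skip] <;> · simp only [hAdef] at *; linarith
  have hg_bd : ∀ i, max (g i (x + Δx)) 0 ≤ ℓg i / 2 * A := by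
    intro i
    have hu := my_descent (g i) (gg i) (ℓg i) (hg i) (hglip i) x Δx
    have hfe := hfeasIneq i
    have hnn : (0:ℝ) ≤ ℓg i / 2 * A := by
      have := hℓg i
      positivity
    apply max_le _ hnn
    simp only [hAdef] at *
    linarith
  -- τ nonnegativity per index
  have hτh : ∀ i : Fin me, (0:ℝ) ≤ τ := fun i => ((abs_nonneg _).trans (hlam_bd i)).trans hτΛ
  have hτg : ∀ i : Fin mi, (0:ℝ) ≤ τ := fun i => ((abs_nonneg _).trans (hmu_bd i)).trans hτM
  -- sum bounds
  have hH : τ * (∑ i, |h i (x + Δx)|) ≤ (τ / 2 * ∑ i, ℓh i) * A := by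
    calc τ * (∑ i, |h i (x + Δx)|) = ∑ i, τ * |h i (x + Δx)| := Finset.mul_sum _ _ _
      _ ≤ ∑ i, τ * (ℓh i / 2 * A) :=
          Finset.sum_le_sum fun i _ => mul_le_mul_of_nonneg_left (hh_bd i) (hτh i)
      _ = (τ / 2 * ∑ i, ℓh i) * A := by
          simp only [Finset.mul_sum, Finset.sum_mul]
          exact Finset.sum_congr rfl fun i _ => by ring
  have hG : τ * (∑ i, max (g i (x + Δx)) 0) ≤ (τ / 2 * ∑ i, ℓg i) * A := by
    calc τ * (∑ i, max (g i (x + Δx)) 0) = ∑ i, τ * max (g i (x + Δx)) 0 := Finset.mul_sum _ _ _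
      _ ≤ ∑ i, τ * (ℓg i / 2 * A) :=
          Finset.sum_le_sum fun i _ => mul_le_mul_of_nonneg_left (hg_bd i) (hτg i)
      _ = (τ / 2 * ∑ i, ℓg i) * A := by
          simp only [Finset.mul_sum, Finset.sum_mul]
          exact Finset.sum_congr rfl fun i _ => by ring
  -- multiplier bounds
  have hlamh : (∑ i, lam i * h i x) ≤ τ * ∑ i, |h i x| := by
    rw [Finset.mul_sum]
    apply Finset.sum_le_sum
    intro i _
    calc lam i * h i x ≤ |lam i * h i x| := le_abs_self _
      _ = |lam i| * |h i x| := abs_mul _ _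
      _ ≤ τ * |h i x| :=
          mul_le_mul_of_nonneg_right ((hlam_bd i).trans hτΛ) (abs_nonneg _)
  have hmug : (∑ i, mu i * g i x) ≤ τ * ∑ i, max (g i x) 0 := by
    rw [Finset.mul_sum]
    apply Finset.sum_le_sum
    intro i _
    calc mu i * g i x ≤ mu i * max (g i x) 0 :=
          mul_le_mul_of_nonneg_left (le_max_left _ _) (hmu_nonneg i)
      _ ≤ τ * max (g i x) 0 := by
          apply mul_le_mul_of_nonneg_right _ (le_max_right _ _)
          exact (le_abs_self _).trans ((hmu_bd i).trans hτM)
  -- assemble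
  have hΦdiff : Φ (x + Δx) - Φ x
      = (f (x + Δx) - f x) + τ * (∑ i, |h i (x + Δx)|) - τ * (∑ i, |h i x|)
        + τ * (∑ i, max (g i (x + Δx)) 0) - τ * (∑ i, max (g i x) 0) := by
    simp only [hΦ]
    ring
  rw [hΦdiff, hCΦ]
  simp only [hAdef] at *
  nlinarith [hf_bd, hS, hH, hG, hlamh, hmug]
end
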